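/- arXiv:2001.11708 — 6 statements merged into one kernel-verified Lean document; each statement's English description precedes it below -/
import Mathlib

section
/- The set of nonnegative t-scalars is closed under t-scalar addition and under the circular convolution product: if X and Y are nonnegative t-scalars, then X + Y and X ∘ Y are nonnegative. Moreover, every nonnegative t-scalar is self-conjugate. -/
open scoped BigOperators
open scoped Classical

noncomputable section

variable {N : ℕ}

/-- The underlying group `G = ZMod I₁ × ⋯ × ZMod I_N`. -/
abbrev G (I : Fin N → ℕ) : Type := ∀ n : Fin N, ZMod (I n)

/-- A t-scalar is a function `G → ℂ`. -/
abbrev TS (I : Fin N → ℕ) : Type := G I → ℂ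

variable {I : Fin N → ℕ} [∀ n, NeZero (I n)]

/-- Circular convolution product of t-scalars. -/
def tconv (X Y : TS I) : TS I := fun i => ∑ j, X (i - j) * Y j

/-- The zero t-scalar. -/
def ZT : TS I := fun _ => 0

/-- The identity t-scalar: the indicator function of `0 ∈ G`. -/
def ET : TS I := fun i => if i = 0 then 1 else 0

/-- The Fourier transform of a t-scalar:
`F(X)(i) = Σ_j X(j)·exp(2π√−1·Σ_n i_n·j_n / I_n)`. -/
def tfourier (X : TS I) : TS I :=
  fun i => ∑ j, X j * Complex.exp (2 * Real.pi * Complex.I *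
      ∑ n, ((i n).val : ℂ) * ((j n).val : ℂ) / ((I n : ℕ) : ℂ))

/-- Conjugate of a t-scalar: `conj(X)(i) = complex conjugate of X(−i)`. -/
def tconj (X : TS I) : TS I := fun i => starRingEnd ℂ (X (-i))

/-- A t-scalar is self-conjugate if `X = conj(X)`. -/
def SelfConj (X : TS I) : Prop := X = tconj X

/-- Real part `Re(X) = 2⁻¹(X + conj X)` of a t-scalar. -/
def tRe (X : TS I) : TS I := fun i => (X i + tconj X i) / 2

/-- Imaginary part `Im(X) = (2√−1)⁻¹(X − conj X)` of a t-scalar. -/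
def tIm (X : TS I) : TS I := fun i => (X i - tconj X i) / (2 * Complex.I)

/-- A t-scalar is nonnegative if it is `Y ∘ Y` for some self-conjugate `Y`. -/
def TNonneg (X : TS I) : Prop := ∃ Y : TS I, SelfConj Y ∧ X = tconv Y Y

/-- A t-scalar is invertible if `X ∘ Y = E_T` for some `Y`. -/
def TInv (X : TS I) : Prop := ∃ Y : TS I, tconv X Y = ET


/-! ### Auxiliary Fourier machinery -/

section Aux

lemma conj_stdAddChar' {m : ℕ} [NeZero m] (a : ZMod m) :
    (starRingEnd ℂ) (ZMod.stdAddChar a) = ZMod.stdAddChar (-a) := by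
  rw [ZMod.stdAddChar_apply, ZMod.stdAddChar_apply, AddChar.map_neg_eq_inv]
  exact (Circle.coe_inv_eq_conj _).symm

/-- character pairing on `G I` -/
def eChar (i j : G I) : ℂ := ∏ n, ZMod.stdAddChar (i n * j n)

lemma eChar_comm (i j : G I) : eChar i j = eChar j i := by
  simp only [eChar, mul_comm]

lemma eChar_add_right (i j k : G I) : eChar i (j + k) = eChar i j * eChar i k := by
  simp only [eChar, Pi.add_apply, mul_add, AddChar.map_add_eq_mul, Finset.prod_mul_distrib]

lemma eChar_neg_right (i j : G I) : eChar i (-j) = eChar j (-i) := by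
  simp only [eChar, Pi.neg_apply, mul_neg, neg_mul, mul_comm]

lemma eChar_neg_neg (i j : G I) : eChar (-i) (-j) = eChar i j := by
  simp only [eChar, Pi.neg_apply, neg_mul_neg]

lemma conj_eChar (i j : G I) : (starRingEnd ℂ) (eChar i j) = eChar i (-j) := by
  rw [eChar, map_prod]
  simp only [conj_stdAddChar', eChar, Pi.neg_apply, mul_neg]

lemma sum_stdAddChar_mul {m : ℕ} [NeZero m] (t : ZMod m) :
    ∑ x : ZMod m, ZMod.stdAddChar (x * t) = if t = 0 then (m : ℂ) else 0 := by
  have hc : ∀ x : ZMod m, x * t = t * x := fun x => mul_comm x t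
  simp_rw [hc]
  split_ifs with h
  · simp only [h, zero_mul, AddChar.map_zero_eq_one, Finset.sum_const, Finset.card_univ,
      ZMod.card, nsmul_eq_mul, mul_one]
  · exact AddChar.sum_eq_zero_of_ne_one (ZMod.isPrimitive_stdAddChar m h)

lemma sum_eChar (t : G I) :
    ∑ j : G I, eChar j t = if t = 0 then (Fintype.card (G I) : ℂ) else 0 := by
  have h1 : ∏ n, ∑ x : ZMod (I n), ZMod.stdAddChar (x * t n) = ∑ j : G I, eChar j t := by
    rw [Finset.prod_univ_sum, Fintype.piFinset_univ]
    rfl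
  rw [← h1]
  split_ifs with h
  · subst h
    simp [sum_stdAddChar_mul, Fintype.card_pi, ZMod.card]
  · obtain ⟨n, hn⟩ := Function.ne_iff.mp h
    exact Finset.prod_eq_zero (Finset.mem_univ n)
      (by rw [sum_stdAddChar_mul]; exact if_neg (by simpa using hn))

variable (I) in
/-- Fourier transform (auxiliary). -/
def tF (X : TS I) : TS I := fun i => ∑ j, X j * eChar i j

lemma key_inversion (f : TS I) (i : G I) :
    ∑ j, (∑ k, f k * eChar j k) * eChar j (-i) = (Fintype.card (G I) : ℂ) * f i := by
  have h1 : ∀ j : G I, (∑ k, f k * eChar j k) * eChar j (-i)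
      = ∑ k, f k * eChar j (k - i) := by
    intro j
    rw [Finset.sum_mul]
    refine Finset.sum_congr rfl fun k _ => ?_
    rw [mul_assoc, ← eChar_add_right, sub_eq_add_neg]
  simp_rw [h1]
  rw [Finset.sum_comm]
  have h2 : ∀ k : G I, ∑ j : G I, f k * eChar j (k - i)
      = f k * ∑ j : G I, eChar j (k - i) := fun k => (Finset.mul_sum _ _ _).symm
  simp_rw [h2, sum_eChar, sub_eq_zero]
  simp [mul_ite, mul_zero, Finset.sum_ite_eq', mul_comm]

lemma tF_key (X : TS I) (i : G I) :
    ∑ j, tF I X j * eChar j (-i) = (Fintype.card (G I) : ℂ) * X i :=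
  key_inversion X i

lemma card_ne_zero' : (Fintype.card (G I) : ℂ) ≠ 0 :=
  Nat.cast_ne_zero.mpr Fintype.card_ne_zero

lemma tF_inj : Function.Injective (tF I) := by
  intro X Y h
  funext i
  have hX := tF_key X i
  have hY := tF_key Y i
  rw [h, hY] at hX
  exact mul_left_cancel₀ card_ne_zero' hX.symm

lemma tF_add (X Y : TS I) (i : G I) : tF I (X + Y) i = tF I X i + tF I Y i := by
  simp [tF, add_mul, Finset.sum_add_distrib]

lemma tF_conj (X : TS I) (i : G I) : tF I (tconj X) i = (starRingEnd ℂ) (tF I X i) := by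
  rw [tF, tF, map_sum]
  refine Fintype.sum_equiv (Equiv.neg (G I)) _ _ fun j => ?_
  simp only [tconj, Equiv.neg_apply, map_mul, conj_eChar, neg_neg]

lemma tF_conv (X Y : TS I) (i : G I) : tF I (tconv X Y) i = tF I X i * tF I Y i := by
  simp only [tF, tconv]
  have h1 : ∀ k : G I, (∑ j, X (k - j) * Y j) * eChar i k
      = ∑ j, X (k - j) * Y j * eChar i k := fun k => Finset.sum_mul _ _ _
  simp_rw [h1]
  rw [Finset.sum_comm]
  have h2 : ∀ j : G I, ∑ k, X (k - j) * Y j * eChar i k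
      = (∑ m, X m * eChar i m) * (Y j * eChar i j) := by
    intro j
    have h3 : ∑ k, X (k - j) * Y j * eChar i k
        = ∑ m, X m * Y j * eChar i (m + j) := by
      refine Fintype.sum_equiv (Equiv.subRight j) _ _ fun k => ?_
      simp only [Equiv.subRight_apply, sub_add_cancel]
    rw [h3, Finset.sum_mul]
    refine Finset.sum_congr rfl fun m _ => ?_
    rw [eChar_add_right]
    ring
  simp_rw [h2]
  rw [← Finset.mul_sum]

variable (I) in
/-- Inverse Fourier transform (auxiliary). -/
def tFinv (f : TS I) : TS I :=
  fun i => (Fintype.card (G I) : ℂ)⁻¹ * ∑ j, f j * eChar j (-i)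

lemma tF_tFinv (f : TS I) : tF I (tFinv I f) = f := by
  funext i
  have h1 : tF I (tFinv I f) i
      = (Fintype.card (G I) : ℂ)⁻¹ * ∑ j, (∑ k, f k * eChar k (-j)) * eChar i j := by
    rw [tF]
    simp only [tFinv]
    rw [Finset.mul_sum]
    exact Finset.sum_congr rfl fun j _ => by ring
  rw [h1]
  have h2 : ∑ j, (∑ k, f k * eChar k (-j)) * eChar i j
      = ∑ j, (∑ k, f k * eChar j k) * eChar j (-i) := by
    refine Fintype.sum_equiv (Equiv.neg (G I)) _ _ fun j => ?_
    congr 1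
    · refine Finset.sum_congr rfl fun k _ => ?_
      rw [Equiv.neg_apply, eChar_comm]
    · rw [Equiv.neg_apply]
      rw [show eChar (-j) (-i) = eChar j i from eChar_neg_neg j i, eChar_comm]
  rw [h2, key_inversion, inv_mul_cancel_left₀ card_ne_zero']

lemma tnonneg_iff (X : TS I) :
    TNonneg X ↔ ∀ i, ∃ r : ℝ, 0 ≤ r ∧ tF I X i = (r : ℂ) := by
  constructor
  · rintro ⟨Y, hY, rfl⟩ i
    have hreal : (starRingEnd ℂ) (tF I Y i) = tF I Y i := by
      conv_rhs => rw [hY]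
      rw [tF_conj]
    obtain ⟨r, hr⟩ := Complex.conj_eq_iff_real.mp hreal
    refine ⟨r * r, mul_self_nonneg r, ?_⟩
    rw [tF_conv, hr, Complex.ofReal_mul]
  · intro h
    set g : TS I := fun i => ((Real.sqrt (tF I X i).re : ℝ) : ℂ) with hg
    have hFg : tF I (tFinv I g) = g := tF_tFinv g
    have hZconj : SelfConj (tFinv I g) := by
      refine (tF_inj ?_)
      funext i
      rw [tF_conj, hFg]
      simp [hg, Complex.conj_ofReal]
    refine ⟨tFinv I g, hZconj, tF_inj ?_⟩
    funext i
    rw [tF_conv, hFg]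
    obtain ⟨r, hr0, hr⟩ := h i
    have hre : (tF I X i).re = r := by rw [hr]; simp
    rw [hr, hg]
    simp only [hre]
    rw [← Complex.ofReal_mul, Real.mul_self_sqrt hr0]

end Aux

/-- nonnegative t-scalars are closed under addition and convolution, and
every nonnegative t-scalar is self-conjugate. -/
theorem nonneg_closed (N : ℕ) (I : Fin N → ℕ) [∀ n, NeZero (I n)] :
    (∀ X Y : TS I, TNonneg X → TNonneg Y → TNonneg (X + Y)) ∧
    (∀ X Y : TS I, TNonneg X → TNonneg Y → TNonneg (tconv X Y)) ∧
    (∀ X : TS I, TNonneg X → SelfConj X) := by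
  refine ⟨?_, ?_, ?_⟩
  · intro X Y hX hY
    rw [tnonneg_iff] at hX hY ⊢
    intro i
    obtain ⟨r, hr0, hr⟩ := hX i
    obtain ⟨s, hs0, hs⟩ := hY i
    exact ⟨r + s, by positivity, by rw [tF_add, hr, hs, Complex.ofReal_add]⟩
  · intro X Y hX hY
    rw [tnonneg_iff] at hX hY ⊢
    intro i
    obtain ⟨r, hr0, hr⟩ := hX i
    obtain ⟨s, hs0, hs⟩ := hY i
    exact ⟨r * s, mul_nonneg hr0 hs0, by rw [tF_conv, hr, hs, Complex.ofReal_mul]⟩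
  · intro X hX
    rw [tnonneg_iff] at hX
    refine (tF_inj ?_).symm
    funext i
    rw [tF_conj]
    obtain ⟨r, _, hr⟩ := hX i
    rw [hr, Complex.conj_ofReal]
end
end

section
/- A t-scalar X is nonnegative if and only if every value of its Fourier transform is a nonnegative real number, i.e., F(X)(i) ∈ ℝ and F(X)(i) ≥ 0 for all i ∈ G. -/
open scoped BigOperators
open scoped Classical

noncomputable section

variable {N : ℕ}

variable {I : Fin N → ℕ} [∀ n, NeZero (I n)]

namespace NonnegAux

open Complex Finset

/-- The character pairing. -/
def ech (i j : G I) : ℂ := Complex.exp (2 * Real.pi * Complex.I *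
      ∑ n, ((i n).val : ℂ) * ((j n).val : ℂ) / ((I n : ℕ) : ℂ))

lemma tfourier_eq (X : TS I) (i : G I) : tfourier X i = ∑ j, X j * ech i j := rfl

/-- The basic primitive root of unity. -/
def zeta (m : ℕ) : ℂ := Complex.exp (2 * Real.pi * Complex.I / m)

lemma zeta_pow_self (m : ℕ) [NeZero m] : zeta m ^ m = 1 := by
  have hm : (m : ℂ) ≠ 0 := Nat.cast_ne_zero.mpr (NeZero.ne m)
  rw [zeta, ← Complex.exp_nat_mul]
  rw [show (m : ℂ) * (2 * Real.pi * Complex.I / m) = 2 * Real.pi * Complex.I by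
    field_simp]
  exact Complex.exp_two_pi_mul_I

lemma pow_mod_eq {m : ℕ} (z : ℂ) (h : z ^ m = 1) (s : ℕ) : z ^ s = z ^ (s % m) := by
  conv_lhs => rw [← Nat.mod_add_div s m]
  rw [pow_add, pow_mul, h, one_pow, mul_one]

lemma pow_congr_mod {m : ℕ} (z : ℂ) (h : z ^ m = 1) {s t : ℕ} (hst : s ≡ t [MOD m]) :
    z ^ s = z ^ t := by
  rw [pow_mod_eq z h s, pow_mod_eq z h t, hst]

lemma ech_term (m : ℕ) [NeZero m] (a v : ℕ) :
    Complex.exp (2 * Real.pi * Complex.I * ((a : ℂ) * (v : ℂ) / (m : ℂ)))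
      = zeta m ^ (a * v) := by
  have hm : (m : ℂ) ≠ 0 := Nat.cast_ne_zero.mpr (NeZero.ne m)
  rw [zeta, ← Complex.exp_nat_mul]
  congr 1
  push_cast
  field_simp

lemma ech_eq_prod (i j : G I) :
    ech i j = ∏ n, zeta (I n) ^ ((i n).val * (j n).val) := by
  rw [ech, Finset.mul_sum, Complex.exp_sum]
  refine Finset.prod_congr rfl fun n _ => ?_
  rw [← ech_term (I n) (i n).val (j n).val]

lemma ech_comm (i j : G I) : ech i j = ech j i := by
  rw [ech_eq_prod, ech_eq_prod]
  exact Finset.prod_congr rfl fun n _ => by rw [Nat.mul_comm]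

lemma ech_zero_right (i : G I) : ech i 0 = 1 := by
  rw [ech_eq_prod]
  refine Finset.prod_eq_one fun n _ => ?_
  simp [ZMod.val_zero]

lemma ech_add_right (i j k : G I) : ech i (j + k) = ech i j * ech i k := by
  rw [ech_eq_prod, ech_eq_prod, ech_eq_prod, ← Finset.prod_mul_distrib]
  refine Finset.prod_congr rfl fun n _ => ?_
  rw [← pow_add]
  refine pow_congr_mod _ (zeta_pow_self (I n)) ?_
  have h1 : ((j + k) n).val ≡ (j n).val + (k n).val [MOD I n] := by
    rw [Pi.add_apply, ZMod.val_add]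
    exact Nat.mod_modEq _ _
  calc (i n).val * ((j + k) n).val
      ≡ (i n).val * ((j n).val + (k n).val) [MOD I n] := h1.mul_left _
    _ = (i n).val * (j n).val + (i n).val * (k n).val := by ring

lemma ech_add_left (i j k : G I) : ech (i + j) k = ech i k * ech j k := by
  rw [ech_comm, ech_add_right, ech_comm k i, ech_comm k j]

lemma ech_mul_neg_right (i j : G I) : ech i j * ech i (-j) = 1 := by
  rw [← ech_add_right, add_neg_cancel, ech_zero_right]

lemma ech_neg_right (i j : G I) : ech i (-j) = (ech i j)⁻¹ :=
  eq_inv_of_mul_eq_one_left (by rw [mul_comm]; exact ech_mul_neg_right i j)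

lemma conj_ech (i j : G I) : (starRingEnd ℂ) (ech i j) = ech i (-j) := by
  rw [ech_neg_right, ech, ← Complex.exp_conj, ← Complex.exp_neg]
  congr 1
  rw [map_mul, map_mul, map_mul, map_sum]
  simp only [Complex.conj_I, map_ofNat, Complex.conj_ofReal]
  rw [show ∀ z : ℂ, 2 * (Real.pi : ℂ) * (-Complex.I) * z = -(2 * Real.pi * Complex.I * z)
    from fun z => by ring]
  congr 2
  refine Finset.sum_congr rfl fun n _ => ?_
  rw [map_div₀, map_mul, Complex.conj_natCast, Complex.conj_natCast, Complex.conj_natCast]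

lemma ech_neg_left (i j : G I) : ech (-i) j = ech i (-j) := by
  rw [ech_comm, ← conj_ech j i, ech_comm j i, conj_ech]

lemma zmod_sum_range (m : ℕ) [NeZero m] (f : ℕ → ℂ) :
    ∑ x : ZMod m, f x.val = ∑ t ∈ Finset.range m, f t := by
  refine Finset.sum_nbij' (fun x => x.val) (fun t => (t : ZMod m)) ?_ ?_ ?_ ?_ ?_
  · intro x _; exact Finset.mem_range.mpr (ZMod.val_lt x)
  · intro t _; exact Finset.mem_univ _
  · intro x _; exact ZMod.natCast_rightInverse x
  · intro t ht; exact ZMod.val_natCast_of_lt (Finset.mem_range.mp ht)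
  · intro x _; rfl

lemma sum_zeta_pow (m : ℕ) [NeZero m] (a : ZMod m) :
    ∑ x : ZMod m, zeta m ^ (a.val * x.val) = if a = 0 then (m : ℂ) else 0 := by
  have hm : m ≠ 0 := NeZero.ne m
  have hprim : IsPrimitiveRoot (zeta m) m := Complex.isPrimitiveRoot_exp m hm
  have hsum : ∑ x : ZMod m, zeta m ^ (a.val * x.val)
      = ∑ t ∈ Finset.range m, (zeta m ^ a.val) ^ t := by
    rw [zmod_sum_range m (fun v => zeta m ^ (a.val * v))]
    exact Finset.sum_congr rfl fun t _ => by rw [pow_mul]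
  rw [hsum]
  by_cases ha : a = 0
  · simp [ha, ZMod.val_zero]
  · rw [if_neg ha]
    have hne : zeta m ^ a.val ≠ 1 := by
      intro hc
      have hdvd : m ∣ a.val := (hprim.pow_eq_one_iff_dvd a.val).mp hc
      have hlt : a.val < m := ZMod.val_lt a
      have hpos : a.val ≠ 0 := fun h0 => ha ((ZMod.val_eq_zero a).mp h0)
      exact hpos (Nat.eq_zero_of_dvd_of_lt hdvd hlt)
    rw [geom_sum_eq hne]
    have hone : (zeta m ^ a.val) ^ m = 1 := by
      rw [← pow_mul, mul_comm, pow_mul, zeta_pow_self, one_pow]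
    rw [hone]
    simp

lemma sum_ech_right (i : G I) :
    ∑ j : G I, ech i j = if i = 0 then (Fintype.card (G I) : ℂ) else 0 := by
  have h1 : ∑ j : G I, ech i j
      = ∏ n, ∑ x : ZMod (I n), zeta (I n) ^ ((i n).val * x.val) := by
    rw [Fintype.prod_sum]
    exact Fintype.sum_congr _ _ fun j => ech_eq_prod i j
  rw [h1]
  have h2 : ∀ n, ∑ x : ZMod (I n), zeta (I n) ^ ((i n).val * x.val)
      = if i n = 0 then ((I n : ℕ) : ℂ) else 0 := fun n => sum_zeta_pow (I n) (i n)
  simp_rw [h2]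
  have hc : (Fintype.card (G I) : ℂ) = ∏ n, ((I n : ℕ) : ℂ) := by
    rw [Fintype.card_pi, Nat.cast_prod]
    exact Finset.prod_congr rfl fun n _ => by rw [ZMod.card]
  by_cases hi : i = 0
  · subst hi
    rw [if_pos rfl, hc]
    exact Finset.prod_congr rfl fun n _ => by rw [Pi.zero_apply, if_pos rfl]
  · rw [if_neg hi]
    obtain ⟨n, hn⟩ : ∃ n, i n ≠ 0 := by
      by_contra hcon
      push_neg at hcon
      exact hi (funext hcon)
    exact Finset.prod_eq_zero (Finset.mem_univ n) (if_neg hn)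

lemma sum_ech_left (j : G I) :
    ∑ i : G I, ech i j = if j = 0 then (Fintype.card (G I) : ℂ) else 0 := by
  rw [← sum_ech_right j]
  exact Fintype.sum_congr _ _ fun i => ech_comm i j

lemma tfourier_tconv (Y Z : TS I) (i : G I) :
    tfourier (tconv Y Z) i = tfourier Y i * tfourier Z i := by
  rw [tfourier_eq, tfourier_eq, tfourier_eq]
  calc ∑ k, tconv Y Z k * ech i k
      = ∑ k, ∑ j, Y (k - j) * Z j * ech i k := by
        refine Finset.sum_congr rfl fun k _ => ?_
        rw [tconv, Finset.sum_mul]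
    _ = ∑ j, ∑ k, Y (k - j) * Z j * ech i k := Finset.sum_comm
    _ = ∑ j, ∑ u, (Y u * ech i u) * (Z j * ech i j) := by
        refine Finset.sum_congr rfl fun j _ => ?_
        refine Fintype.sum_equiv (Equiv.subRight j) _ _ fun k => ?_
        simp only [Equiv.subRight_apply]
        have h2 : ech i k = ech i (k - j) * ech i j := by
          rw [← ech_add_right, sub_add_cancel]
        rw [h2]; ring
    _ = (∑ u, Y u * ech i u) * ∑ j, Z j * ech i j := by
        rw [Finset.sum_comm, ← Finset.sum_mul_sum]

lemma tfourier_tconj (Y : TS I) (i : G I) :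
    tfourier (tconj Y) i = (starRingEnd ℂ) (tfourier Y i) := by
  rw [tfourier_eq, tfourier_eq, map_sum]
  refine Fintype.sum_equiv (Equiv.neg (G I)) _ _ fun j => ?_
  rw [Equiv.neg_apply, map_mul, conj_ech, neg_neg]
  simp [tconj]

lemma fourier_inv (X : TS I) (j : G I) :
    (Fintype.card (G I) : ℂ)⁻¹ * ∑ i, tfourier X i * ech i (-j) = X j := by
  have hcard : (Fintype.card (G I) : ℂ) ≠ 0 :=
    Nat.cast_ne_zero.mpr Fintype.card_ne_zero
  have h1 : ∑ i, tfourier X i * ech i (-j) = ∑ k, X k * ∑ i, ech i (k - j) := by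
    calc ∑ i, tfourier X i * ech i (-j)
        = ∑ i, ∑ k, X k * (ech i k * ech i (-j)) := by
          refine Finset.sum_congr rfl fun i _ => ?_
          rw [tfourier_eq, Finset.sum_mul]
          exact Finset.sum_congr rfl fun k _ => by ring
      _ = ∑ k, ∑ i, X k * ech i (k - j) := by
          rw [Finset.sum_comm]
          refine Finset.sum_congr rfl fun k _ => Finset.sum_congr rfl fun i _ => ?_
          rw [← ech_add_right, sub_eq_add_neg]
      _ = ∑ k, X k * ∑ i, ech i (k - j) :=
          Finset.sum_congr rfl fun k _ => (Finset.mul_sum _ _ _).symm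
  rw [h1]
  have h2 : ∀ k : G I, ∑ i, ech i (k - j)
      = if k = j then (Fintype.card (G I) : ℂ) else 0 := by
    intro k
    rw [sum_ech_left (k - j)]
    congr 1
    simp [sub_eq_zero]
  simp_rw [h2]
  rw [Finset.sum_congr rfl (fun k _ => by rw [mul_ite, mul_zero]),
    Finset.sum_ite_eq' Finset.univ j (fun k => X k * (Fintype.card (G I) : ℂ)),
    if_pos (Finset.mem_univ j), mul_comm (X j), ← mul_assoc, inv_mul_cancel₀ hcard,
    one_mul]

lemma tfourier_injective (X Y : TS I) (h : ∀ i, tfourier X i = tfourier Y i) :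
    X = Y := by
  funext j
  rw [← fourier_inv X j, ← fourier_inv Y j]
  congr 1
  exact Finset.sum_congr rfl fun i _ => by rw [h i]

/-- Inverse-transform synthesis. -/
def synth (s : TS I) : TS I :=
  fun j => (Fintype.card (G I) : ℂ)⁻¹ * ∑ k, s k * ech k (-j)

lemma tfourier_synth (s : TS I) (i : G I) : tfourier (synth s) i = s i := by
  have hcard : (Fintype.card (G I) : ℂ) ≠ 0 :=
    Nat.cast_ne_zero.mpr Fintype.card_ne_zero
  rw [tfourier_eq]
  calc ∑ j, synth s j * ech i j
      = ∑ j, (Fintype.card (G I) : ℂ)⁻¹ * ∑ k, s k * ech (i - k) j := by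
        refine Finset.sum_congr rfl fun j _ => ?_
        rw [synth, mul_assoc, Finset.sum_mul]
        congr 1
        refine Finset.sum_congr rfl fun k _ => ?_
        rw [mul_assoc]
        congr 1
        rw [← ech_neg_left, ← ech_add_left, neg_add_eq_sub]
    _ = (Fintype.card (G I) : ℂ)⁻¹ * ∑ k, s k * ∑ j, ech (i - k) j := by
        rw [← Finset.mul_sum]
        congr 1
        rw [Finset.sum_comm]
        exact Finset.sum_congr rfl fun k _ => (Finset.mul_sum _ _ _).symm
    _ = s i := by
        have h2 : ∀ k : G I, ∑ j, ech (i - k) j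
            = if k = i then (Fintype.card (G I) : ℂ) else 0 := by
          intro k
          rw [sum_ech_right (i - k)]
          congr 1
          simp [sub_eq_zero, eq_comm]
        simp_rw [h2]
        rw [Finset.sum_congr rfl (fun k _ => by rw [mul_ite, mul_zero]),
          Finset.sum_ite_eq' Finset.univ i (fun k => s k * (Fintype.card (G I) : ℂ)),
          if_pos (Finset.mem_univ i), mul_comm (s i), ← mul_assoc,
          inv_mul_cancel₀ hcard, one_mul]

lemma synth_selfconj (s : TS I) (hs : ∀ k, (starRingEnd ℂ) (s k) = s k) :
    SelfConj (synth s) := by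
  show synth s = tconj (synth s)
  funext j
  simp only [tconj, synth, neg_neg, map_mul, map_sum, map_inv₀,
    Complex.conj_natCast, conj_ech, hs]

end NonnegAux

/-- a t-scalar is nonnegative iff every value of its Fourier transform
is a nonnegative real number. -/
theorem nonneg_iff_fourier_nonneg_real (N : ℕ) (I : Fin N → ℕ) [∀ n, NeZero (I n)]
    (X : TS I) :
    TNonneg X ↔ ∀ i, (tfourier X i).im = 0 ∧ 0 ≤ (tfourier X i).re := by
  constructor
  · rintro ⟨Y, hY, rfl⟩ i
    have h1 := NonnegAux.tfourier_tconv Y Y i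
    have h2 : tfourier Y i = (starRingEnd ℂ) (tfourier Y i) := by
      conv_lhs => rw [hY]
      exact NonnegAux.tfourier_tconj Y i
    have him : (tfourier Y i).im = 0 := by
      have h3 := congrArg Complex.im h2
      simp only [Complex.conj_im] at h3
      linarith
    rw [h1]
    refine ⟨by simp [Complex.mul_im, him], ?_⟩
    simp only [Complex.mul_re, him, mul_zero, sub_zero]
    exact mul_self_nonneg _
  · intro h
    refine ⟨NonnegAux.synth (fun i => ((Real.sqrt ((tfourier X i).re) : ℝ) : ℂ)),
      NonnegAux.synth_selfconj _ (fun k => by simp), ?_⟩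
    refine NonnegAux.tfourier_injective X _ fun i => ?_
    rw [NonnegAux.tfourier_tconv]
    simp only [NonnegAux.tfourier_synth]
    rw [← Complex.ofReal_mul, Real.mul_self_sqrt (h i).2]
    exact Complex.ext (by simp) (by simp [(h i).1])
end
end

section
/- For every nonnegative t-scalar X there exists a unique nonnegative t-scalar S such that X = S ∘ S (the arithmetic square root of X). -/
open scoped BigOperators
open scoped Classical

noncomputable section

variable {N : ℕ}

variable {I : Fin N → ℕ} [∀ n, NeZero (I n)]

/-! The Fourier transform over the character group of `G` is a linear bijection from t-scalars
onto functions on the dual group; it turns `∘` into the pointwise product and `conj` into pointwise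
complex conjugation. Nonnegative t-scalars therefore correspond exactly to the nonnegative elements
of the commutative C⋆-algebra of `ℂ`-valued functions on the dual group, where every nonnegative
element has a unique nonnegative square root. -/

open ComplexOrder

section CharacterFourier

variable {α : Type*} [AddCommGroup α] [Fintype α]

def charFourier : (α → ℂ) →ₗ[ℂ] AddChar α ℂ → ℂ where
  toFun X ψ := ∑ j, X j * ψ j
  map_add' X Y := by ext ψ; simp only [Pi.add_apply, add_mul, Finset.sum_add_distrib]
  map_smul' c X := by
    ext ψ
    simp only [Pi.smul_apply, smul_eq_mul, mul_assoc, ← Finset.mul_sum, RingHom.id_apply]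

lemma charFourier_apply (X : α → ℂ) (ψ : AddChar α ℂ) : charFourier X ψ = ∑ j, X j * ψ j := rfl

lemma sum_charFourier_mul_map_neg (X : α → ℂ) (k : α) :
    ∑ ψ, charFourier X ψ * ψ (-k) = Fintype.card α * X k := by
  calc ∑ ψ, charFourier X ψ * ψ (-k) = ∑ j, X j * ∑ ψ : AddChar α ℂ, ψ (j - k) := by
        simp only [charFourier_apply, Finset.sum_mul, Finset.mul_sum, sub_eq_add_neg,
          AddChar.map_add_eq_mul, mul_assoc]
        exact Finset.sum_comm
    _ = Fintype.card α * X k := by simp [AddChar.sum_apply_eq_ite, sub_eq_zero, mul_comm]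

lemma charFourier_injective : Function.Injective (charFourier : (α → ℂ) →ₗ[ℂ] _) := by
  refine (injective_iff_map_eq_zero _).2 fun X hX => funext fun k => ?_
  have h := sum_charFourier_mul_map_neg X k
  simp only [hX, Pi.zero_apply, zero_mul, Finset.sum_const_zero] at h
  exact (mul_eq_zero.1 h.symm).resolve_left (Nat.cast_ne_zero.2 Fintype.card_ne_zero)

lemma charFourier_bijective : Function.Bijective (charFourier : (α → ℂ) →ₗ[ℂ] _) :=
  ⟨charFourier_injective, (LinearMap.injective_iff_surjective_of_finrank_eq_finrank
    (by simp [AddChar.card_eq])).1 charFourier_injective⟩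

end CharacterFourier

lemma charFourier_tconv (X Y : TS I) : charFourier (tconv X Y) = charFourier X * charFourier Y := by
  ext ψ
  simp only [Pi.mul_apply, charFourier_apply, tconv, Finset.sum_mul, Finset.mul_sum]
  rw [Finset.sum_comm]
  refine Finset.sum_congr rfl fun j _ => ?_
  rw [← Equiv.sum_comp (Equiv.addRight j)]
  simp only [Equiv.coe_addRight, add_sub_cancel_right, AddChar.map_add_eq_mul]
  exact Finset.sum_congr rfl fun i _ => by ring

lemma charFourier_tconj (X : TS I) : charFourier (tconj X) = star (charFourier X) := by
  ext ψ
  simp only [Pi.star_apply, charFourier_apply, tconj, Complex.star_def, map_sum, map_mul]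
  rw [← Equiv.sum_comp (Equiv.neg (G I))]
  simp [AddChar.map_neg_eq_conj]

lemma selfConj_iff_isSelfAdjoint_charFourier (Y : TS I) :
    SelfConj Y ↔ IsSelfAdjoint (charFourier Y) := by
  rw [SelfConj, IsSelfAdjoint, ← charFourier_tconj, eq_comm]
  exact charFourier_injective.eq_iff.symm

lemma tnonneg_iff_charFourier_nonneg (X : TS I) : TNonneg X ↔ 0 ≤ charFourier X := by
  constructor
  · rintro ⟨Y, hY, rfl⟩
    rw [charFourier_tconv]
    exact ((selfConj_iff_isSelfAdjoint_charFourier Y).1 hY).mul_self_nonneg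
  · intro hX
    obtain ⟨Y, hY⟩ := charFourier_bijective.2 (CFC.sqrt (charFourier X))
    refine ⟨Y, ?_, charFourier_injective ?_⟩
    · rw [selfConj_iff_isSelfAdjoint_charFourier, hY]
      exact IsSelfAdjoint.of_nonneg (CFC.sqrt_nonneg _)
    · rw [charFourier_tconv, hY, CFC.sqrt_mul_sqrt_self _ hX]

/-- every nonnegative t-scalar has a unique nonnegative arithmetic
square root. -/
theorem arithmetic_sqrt_exists_unique (N : ℕ) (I : Fin N → ℕ) [∀ n, NeZero (I n)]
    (X : TS I) (hX : TNonneg X) :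
    ∃! S : TS I, TNonneg S ∧ X = tconv S S := by
  rw [tnonneg_iff_charFourier_nonneg] at hX
  obtain ⟨S, hS⟩ := charFourier_bijective.2 (CFC.sqrt (charFourier X))
  refine ⟨S, ⟨?_, charFourier_injective ?_⟩, fun T ⟨hT, hXT⟩ => charFourier_injective ?_⟩
  · rw [tnonneg_iff_charFourier_nonneg, hS]
    exact CFC.sqrt_nonneg _
  · rw [charFourier_tconv, hS, CFC.sqrt_mul_sqrt_self _ hX]
  · rw [tnonneg_iff_charFourier_nonneg] at hT
    rw [hS, eq_comm, CFC.sqrt_eq_iff _ _ hX hT, ← charFourier_tconv, hXT]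
end
end

section
/- If X is a positive t-scalar (a nonnegative t-scalar that is invertible under the circular convolution product), then its convolution inverse X⁻¹ and its arithmetic square root √X are both positive t-scalars. -/
open scoped BigOperators
open scoped Classical

noncomputable section

variable {N : ℕ}

variable {I : Fin N → ℕ} [∀ n, NeZero (I n)]

lemma tconv_comm (X Y : TS I) : tconv X Y = tconv Y X := by
  funext i
  exact Fintype.sum_equiv (Equiv.subLeft i) _ _ (fun j => by simp [mul_comm])

lemma tconv_assoc (X Y Z : TS I) : tconv (tconv X Y) Z = tconv X (tconv Y Z) := by
  funext i
  simp only [tconv, Finset.sum_mul, Finset.mul_sum]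
  conv_rhs => rw [Finset.sum_comm]
  refine Finset.sum_congr rfl fun a _ => ?_
  refine Fintype.sum_equiv (Equiv.addRight a) _ _ fun b => ?_
  have h1 : i - (b + a) = i - a - b := by abel
  have h2 : b + a - a = b := by abel
  simp only [Equiv.coe_addRight]
  rw [h1, h2]; ring

lemma ET_tconv (X : TS I) : tconv ET X = X := by
  funext i
  simp [tconv, ET, sub_eq_zero]

lemma tconj_tconv (X Y : TS I) : tconj (tconv X Y) = tconv (tconj X) (tconj Y) := by
  funext i
  simp only [tconj, tconv, map_sum, map_mul]
  refine Fintype.sum_equiv (Equiv.neg _) _ _ fun j => ?_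
  simp only [Equiv.neg_apply, neg_neg]
  have h1 : -(i - -j) = -i - j := by abel
  rw [h1]

lemma tconj_ET : tconj (ET : TS I) = ET := by
  funext i
  simp [tconj, ET, neg_eq_zero]

lemma tinv_unique (X Y Y' : TS I) (h : tconv X Y = ET) (h' : tconv X Y' = ET) :
    Y = Y' := by
  calc Y = tconv ET Y := (ET_tconv Y).symm
  _ = tconv (tconv X Y') Y := by rw [h']
  _ = tconv (tconv X Y) Y' := by
      rw [tconv_assoc, tconv_assoc, tconv_comm Y' Y]
  _ = tconv ET Y' := by rw [h]
  _ = Y' := ET_tconv Y'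

/-- if `X` is a positive t-scalar (nonnegative and invertible), then its
convolution inverse and its arithmetic square root are positive t-scalars. -/
theorem inv_and_sqrt_of_positive (N : ℕ) (I : Fin N → ℕ) [∀ n, NeZero (I n)]
    (X Y S : TS I) (hX : TNonneg X) (hXY : tconv X Y = ET)
    (hS : TNonneg S) (hSS : tconv S S = X) :
    (TNonneg Y ∧ TInv Y) ∧ (TNonneg S ∧ TInv S) := by
  obtain ⟨W, hWsc, hWW⟩ := hX
  have hWconj : tconj W = W := hWsc.symm
  have hXconj : tconj X = X := by rw [hWW, tconj_tconv, hWconj]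
  have hYconj : tconj Y = Y := by
    have h' : tconv X (tconj Y) = ET := by
      rw [← hXconj, ← tconj_tconv, hXY, tconj_ET]
    exact tinv_unique X (tconj Y) Y h' hXY
  -- the candidate square root of Y
  set V : TS I := tconv W Y with hV
  have hVsc : SelfConj V := by
    unfold SelfConj
    rw [hV, tconj_tconv, hWconj, hYconj]
  have hVV : tconv V V = Y := by
    rw [hV, tconv_assoc, tconv_comm Y (tconv W Y), tconv_assoc, ← tconv_assoc W W,
      ← hWW, ← tconv_assoc, hXY, ET_tconv]
  have hSinv : TInv S := by
    refine ⟨tconv S Y, ?_⟩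
    rw [← tconv_assoc, hSS, hXY]
  refine ⟨⟨⟨V, hVsc, hVV.symm⟩, ⟨X, by rw [tconv_comm]; exact hXY⟩⟩, hS, hSinv⟩
end
end

section
/- Let X be a t-scalar whose absolute t-value r(X) = √(Re(X)∘Re(X) + Im(X)∘Im(X)) is invertible, and let φ(X) = r(X)⁻¹ ∘ X. Then φ(X) ∘ conj(φ(X)) = E_T. -/
open scoped BigOperators
open scoped Classical

noncomputable section

variable {N : ℕ}

variable {I : Fin N → ℕ} [∀ n, NeZero (I n)]

lemma tconv_ET (X : TS I) : tconv X ET = X := by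
  funext i
  simp [tconv, ET, mul_ite]

lemma re_im_sq (X : TS I) :
    tconv (tRe X) (tRe X) + tconv (tIm X) (tIm X) = tconv X (tconj X) := by
  have key : ∀ i, tconv (tRe X) (tRe X) i + tconv (tIm X) (tIm X) i
      = (tconv X (tconj X) i + tconv (tconj X) X i) / 2 := by
    intro i
    simp only [tconv, tRe, tIm]
    rw [← Finset.sum_add_distrib, ← Finset.sum_add_distrib, Finset.sum_div]
    refine Finset.sum_congr rfl fun j _ => ?_
    have hI : Complex.I ≠ 0 := Complex.I_ne_zero
    field_simp
    ring_nf
    simp only [Complex.I_sq]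
    ring
  funext i
  have := key i
  simp only [Pi.add_apply]
  rw [this]
  have : tconv (tconj X) X = tconv X (tconj X) := tconv_comm _ _
  rw [this]
  ring

/-- if the absolute t-value `r(X)` (the nonnegative square root of
`Re(X)∘Re(X) + Im(X)∘Im(X)`) is invertible with inverse `Rinv`, then the generalized
angle `φ(X) = r(X)⁻¹ ∘ X` satisfies `φ(X) ∘ conj(φ(X)) = E_T`. -/
theorem phase_times_conj_eq_one (N : ℕ) (I : Fin N → ℕ) [∀ n, NeZero (I n)]
    (X R Rinv : TS I) (hR : TNonneg R)
    (hRR : tconv R R = tconv (tRe X) (tRe X) + tconv (tIm X) (tIm X))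
    (hinv : tconv R Rinv = ET) :
    tconv (tconv Rinv X) (tconj (tconv Rinv X)) = ET := by
  -- R is self-conjugate
  obtain ⟨Y, hY, hRY⟩ := hR
  have hRconj : tconj R = R := by
    rw [hRY, tconj_tconv, ← hY]
  -- conj Rinv is also an inverse of R
  have h1 : tconv R (tconj Rinv) = ET := by
    have := congrArg tconj hinv
    rwa [tconj_tconv, hRconj, tconj_ET] at this
  -- hence tconj Rinv = Rinv
  have h2 : tconj Rinv = Rinv := by
    calc tconj Rinv = tconv (tconj Rinv) ET := (tconv_ET _).symm
      _ = tconv (tconj Rinv) (tconv R Rinv) := by rw [hinv]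
      _ = tconv (tconv (tconj Rinv) R) Rinv := (tconv_assoc _ _ _).symm
      _ = tconv (tconv R (tconj Rinv)) Rinv := by rw [tconv_comm (tconj Rinv) R]
      _ = tconv ET Rinv := by rw [h1]
      _ = Rinv := ET_tconv _
  have hXX : tconv X (tconj X) = tconv R R := by
    rw [hRR, re_im_sq]
  calc tconv (tconv Rinv X) (tconj (tconv Rinv X))
      = tconv (tconv Rinv X) (tconv Rinv (tconj X)) := by
        rw [tconj_tconv, h2]
    _ = tconv Rinv (tconv X (tconv Rinv (tconj X))) := tconv_assoc _ _ _
    _ = tconv Rinv (tconv (tconv X Rinv) (tconj X)) := by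
        rw [tconv_assoc X Rinv (tconj X)]
    _ = tconv Rinv (tconv (tconv Rinv X) (tconj X)) := by
        rw [tconv_comm X Rinv]
    _ = tconv Rinv (tconv Rinv (tconv X (tconj X))) := by
        rw [tconv_assoc Rinv X (tconj X)]
    _ = tconv Rinv (tconv Rinv (tconv R R)) := by rw [hXX]
    _ = tconv Rinv (tconv (tconv Rinv R) R) := by
        rw [tconv_assoc Rinv R R]
    _ = tconv (tconv Rinv (tconv Rinv R)) R := (tconv_assoc _ _ _).symm
    _ = tconv (tconv (tconv Rinv R) Rinv) R := by
        rw [tconv_comm Rinv (tconv Rinv R)]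
    _ = tconv (tconv (tconv R Rinv) Rinv) R := by rw [tconv_comm Rinv R]
    _ = tconv (tconv ET Rinv) R := by rw [hinv]
    _ = tconv Rinv R := by rw [ET_tconv]
    _ = tconv R Rinv := tconv_comm _ _
    _ = ET := hinv
end
end

section
/- Generalized Eckart–Young–Mirsky theorem: let X ∈ C^{D₁×D₂} be a t-matrix with TSVD X = U ∘ diag(λ₁,…,λ_Q) ∘ Vᴴ, Q = min(D₁,D₂), and for 1 ≤ r ≤ Q let X̂ = U ∘ diag(λ₁,…,λ_r, Z_T,…,Z_T) ∘ Vᴴ be the rank-r truncation. Then rank(X̂) ≤ r·E_T, and for every t-matrix Y ∈ C^{D₁×D₂} with rank(Y) ≤ r·E_T one has ‖X − X̂‖_F ≤ ‖X − Y‖_F in the partial order on nonnegative t-scalars. -/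
open scoped BigOperators
open scoped Classical

noncomputable section

variable {N : ℕ}

variable {I : Fin N → ℕ} [∀ n, NeZero (I n)]

/-- t-matrix multiplication: entrywise convolution products. -/
def tmul {a b c : ℕ} (A : Matrix (Fin a) (Fin b) (TS I)) (B : Matrix (Fin b) (Fin c) (TS I)) :
    Matrix (Fin a) (Fin c) (TS I) :=
  Matrix.of fun α γ => ∑ β, tconv (A α β) (B β γ)

/-- Conjugate transpose of a t-matrix. -/
def htrans {a b : ℕ} (A : Matrix (Fin a) (Fin b) (TS I)) : Matrix (Fin b) (Fin a) (TS I) :=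
  Matrix.of fun β α => tconj (A α β)

/-- The identity t-matrix. -/
def tId (Q : ℕ) : Matrix (Fin Q) (Fin Q) (TS I) :=
  Matrix.of fun α β => if α = β then ET else ZT

/-- Diagonal t-matrix with the given t-scalar diagonal entries. -/
def tdiag {Q : ℕ} (lam : Fin Q → TS I) : Matrix (Fin Q) (Fin Q) (TS I) :=
  Matrix.of fun k l => if k = l then lam k else ZT

/-- The `i`-th Fourier fslice of a t-matrix. -/
def fslice {a b : ℕ} (A : Matrix (Fin a) (Fin b) (TS I)) (i : G I) :
    Matrix (Fin a) (Fin b) ℂ :=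
  Matrix.of fun α β => tfourier (A α β) i

/-- Frobenius norm of a complex matrix. -/
def frob {a b : ℕ} (M : Matrix (Fin a) (Fin b) ℂ) : ℝ :=
  Real.sqrt (∑ α, ∑ β, Complex.normSq (M α β))

/-!
The Fourier transform turns circular convolution into pointwise multiplication and `tconj` into
complex conjugation, so in every Fourier slice the TSVD becomes a factorisation
`X̃ = P * diagonal d * Vᴴ` with `Pᴴ P = Vᴴ V = 1` and `d` nonnegative and nonincreasing, and both
claims reduce to the classical Eckart–Young–Mirsky theorem for complex matrices.

For the latter, with `A = P * diagonal d * Vᴴ`, let the columns of `W` be an orthonormal basis of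
the kernel of a competitor `B` of rank at most `r`. Then
`‖A - B‖² ≥ ‖(A - B) W‖² = ‖A W‖² = ∑ₖ d_k² c_k`, where the weights `c_k`, the squared row norms
of `Vᴴ W`, lie in `[0, 1]` and add up to at least `Q - r`. Such weights cannot do better than full
weight on the `Q - r` smallest values `d_k²`, whose sum is the error `‖A - Â‖²` of the truncation.
-/

open Matrix Complex

section FrobeniusSq

variable {m n p : Type*} [Fintype n] [Fintype p]

lemma sum_normSq_eq_re_mul_conjTranspose_apply (M : Matrix m n ℂ) (α : m) :
    ∑ β, normSq (M α β) = ((M * Mᴴ) α α).re := by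
  simp only [mul_apply, conjTranspose_apply, star_def, mul_conj, re_sum, ofReal_re]

lemma mul_mul_conjTranspose_add_mul_one_sub [DecidableEq n] [DecidableEq p] {W : Matrix n p ℂ}
    (hW : Wᴴ * W = 1) (M : Matrix m n ℂ) :
    (M * W) * (M * W)ᴴ + (M * (1 - W * Wᴴ)) * (M * (1 - W * Wᴴ))ᴴ = M * Mᴴ := by
  have hproj : (1 - W * Wᴴ) * (1 - W * Wᴴ)ᴴ = 1 - W * Wᴴ := by
    have hsq : W * Wᴴ * (W * Wᴴ) = W * Wᴴ := by
      rw [Matrix.mul_assoc, ← Matrix.mul_assoc Wᴴ, hW, Matrix.one_mul]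
    simp only [conjTranspose_sub, conjTranspose_one, conjTranspose_mul,
      conjTranspose_conjTranspose, Matrix.sub_mul, Matrix.mul_sub, Matrix.one_mul,
      Matrix.mul_one, hsq]
    abel
  calc (M * W) * (M * W)ᴴ + (M * (1 - W * Wᴴ)) * (M * (1 - W * Wᴴ))ᴴ
      = M * (W * Wᴴ + (1 - W * Wᴴ) * (1 - W * Wᴴ)ᴴ) * Mᴴ := by
        simp only [conjTranspose_mul (M := M), Matrix.mul_assoc, Matrix.mul_add, Matrix.add_mul]
    _ = M * Mᴴ := by rw [hproj, add_sub_cancel, Matrix.mul_one]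

variable [Fintype m]

def frobSq (M : Matrix m n ℂ) : ℝ := ∑ α, ∑ β, normSq (M α β)

lemma frob_eq_sqrt_frobSq {a b : ℕ} (M : Matrix (Fin a) (Fin b) ℂ) : frob M = √(frobSq M) :=
  rfl

lemma frobSq_nonneg (M : Matrix m n ℂ) : 0 ≤ frobSq M :=
  Finset.sum_nonneg fun _ _ => Finset.sum_nonneg fun _ _ => normSq_nonneg _

lemma frobSq_conjTranspose (M : Matrix m n ℂ) : frobSq Mᴴ = frobSq M := by
  simp only [frobSq, conjTranspose_apply, star_def, normSq_conj]
  exact Finset.sum_comm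

lemma frobSq_eq_sum_re_diag (M : Matrix m n ℂ) : frobSq M = ∑ α, ((M * Mᴴ) α α).re :=
  Finset.sum_congr rfl fun α _ => sum_normSq_eq_re_mul_conjTranspose_apply M α

lemma frobSq_of_conjTranspose_mul_self_eq_one [DecidableEq p] {W : Matrix n p ℂ}
    (hW : Wᴴ * W = 1) : frobSq W = Fintype.card p := by
  rw [← frobSq_conjTranspose, frobSq_eq_sum_re_diag, conjTranspose_conjTranspose, hW]
  simp

lemma frobSq_mul_of_conjTranspose_mul_self_eq_one [DecidableEq n] {P : Matrix m n ℂ}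
    (hP : Pᴴ * P = 1) (M : Matrix n p ℂ) : frobSq (P * M) = frobSq M := by
  rw [← frobSq_conjTranspose, frobSq_eq_sum_re_diag, ← frobSq_conjTranspose M,
    frobSq_eq_sum_re_diag, conjTranspose_conjTranspose, conjTranspose_conjTranspose,
    conjTranspose_mul, Matrix.mul_assoc, ← Matrix.mul_assoc Pᴴ, hP, Matrix.one_mul]

lemma frobSq_mul_conjTranspose_of_conjTranspose_mul_self_eq_one [DecidableEq p]
    {V : Matrix n p ℂ} (hV : Vᴴ * V = 1) (M : Matrix m p ℂ) : frobSq (M * Vᴴ) = frobSq M := by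
  rw [← frobSq_conjTranspose, conjTranspose_mul, conjTranspose_conjTranspose,
    frobSq_mul_of_conjTranspose_mul_self_eq_one hV, frobSq_conjTranspose]

lemma frobSq_diagonal_mul [DecidableEq m] (w : m → ℂ) (M : Matrix m n ℂ) :
    frobSq (diagonal w * M) = ∑ k, normSq (w k) * ∑ β, normSq (M k β) := by
  simp only [frobSq, diagonal_mul, normSq_mul, Finset.mul_sum]

lemma frobSq_diagonal [DecidableEq m] (w : m → ℂ) : frobSq (diagonal w) = ∑ k, normSq (w k) := by
  refine Finset.sum_congr rfl fun k _ => ?_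
  rw [Finset.sum_eq_single k (fun j _ hj => by simp [diagonal_apply_ne _ hj.symm]) (by simp),
    diagonal_apply_eq]

lemma frobSq_mul_add_frobSq_mul_one_sub [DecidableEq n] [DecidableEq p] {W : Matrix n p ℂ}
    (hW : Wᴴ * W = 1) (M : Matrix m n ℂ) :
    frobSq (M * W) + frobSq (M * (1 - W * Wᴴ)) = frobSq M := by
  simp only [frobSq_eq_sum_re_diag, ← Finset.sum_add_distrib, ← add_re, ← Matrix.add_apply,
    mul_mul_conjTranspose_add_mul_one_sub hW]

lemma frobSq_mul_le_of_conjTranspose_mul_self_eq_one [DecidableEq n] [DecidableEq p]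
    {W : Matrix n p ℂ} (hW : Wᴴ * W = 1) (M : Matrix m n ℂ) : frobSq (M * W) ≤ frobSq M := by
  linarith [frobSq_mul_add_frobSq_mul_one_sub hW M, frobSq_nonneg (M * (1 - W * Wᴴ))]

lemma frobSq_one_sub_mul_conjTranspose [DecidableEq n] [DecidableEq p] {W : Matrix n p ℂ}
    (hW : Wᴴ * W = 1) : frobSq (1 - W * Wᴴ) = Fintype.card n - Fintype.card p := by
  have h := frobSq_mul_add_frobSq_mul_one_sub hW (1 : Matrix n n ℂ)
  rw [Matrix.one_mul, Matrix.one_mul, frobSq_of_conjTranspose_mul_self_eq_one hW,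
    frobSq_of_conjTranspose_mul_self_eq_one (by simp : (1 : Matrix n n ℂ)ᴴ * 1 = 1)] at h
  linarith

end FrobeniusSq

lemma exists_conjTranspose_mul_self_eq_one_mul_eq_zero {m n : Type*} [Fintype n] [DecidableEq n]
    (B : Matrix m n ℂ) :
    ∃ (l : ℕ) (W : Matrix n (Fin l) ℂ), Wᴴ * W = 1 ∧ B * W = 0 ∧ l + B.rank = Fintype.card n := by
  let g : EuclideanSpace ℂ n →ₗ[ℂ] m → ℂ :=
    B.mulVecLin ∘ₗ (WithLp.linearEquiv 2 ℂ (n → ℂ)).toLinearMap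
  let b := stdOrthonormalBasis ℂ (LinearMap.ker g)
  have hrange : LinearMap.range g = LinearMap.range B.mulVecLin :=
    LinearMap.range_comp_of_range_eq_top _ (LinearEquiv.range _)
  refine ⟨_, Matrix.of fun β j => (b j : EuclideanSpace ℂ n) β, ?_, ?_, ?_⟩
  · ext j j'
    have h := orthonormal_iff_ite.mp b.orthonormal j j'
    rw [Submodule.coe_inner, PiLp.inner_apply] at h
    simpa [mul_apply, one_apply, mul_comm] using h
  · ext α j
    have h := congrFun (LinearMap.mem_ker.mp (b j).2) α
    simp only [g, LinearMap.comp_apply, LinearEquiv.coe_coe, mulVecLin_apply] at h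
    simpa [mul_apply, mulVec, dotProduct] using h
  · have h := LinearMap.finrank_range_add_finrank_ker g
    rw [hrange, finrank_euclideanSpace] at h
    rw [Matrix.rank]
    omega

/-- Writing `[k ∈ s]` for the indicator, the difference of the two sides is
`∑ k, (e k - t) * (c k - [k ∈ s]) + t * (∑ k, c k - #s)`, a sum of nonnegative terms. -/
lemma sum_le_sum_mul_of_threshold {ι : Type*} [Fintype ι] [DecidableEq ι] (s : Finset ι)
    {e c : ι → ℝ} {t : ℝ} (ht : 0 ≤ t) (hs : ∀ k ∈ s, e k ≤ t) (hsc : ∀ k ∉ s, t ≤ e k)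
    (hc0 : ∀ k, 0 ≤ c k) (hc1 : ∀ k, c k ≤ 1) (hc : (s.card : ℝ) ≤ ∑ k, c k) :
    ∑ k ∈ s, e k ≤ ∑ k, e k * c k := by
  have hterm : ∀ k, (if k ∈ s then e k else 0) + t * (c k - if k ∈ s then 1 else 0)
      ≤ e k * c k := by
    intro k
    split_ifs with hk
    · nlinarith [hs k hk, hc1 k]
    · nlinarith [hsc k hk, hc0 k]
  have hsum := Finset.sum_le_sum fun k (_ : k ∈ Finset.univ) => hterm k
  simp only [Finset.sum_add_distrib, ← Finset.mul_sum, Finset.sum_sub_distrib,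
    Finset.sum_ite_mem, Finset.univ_inter, Finset.sum_const, nsmul_eq_mul, mul_one] at hsum
  linarith [mul_nonneg ht (sub_nonneg.2 hc)]

lemma sum_tail_le_sum_mul {Q r : ℕ} {e c : Fin Q → ℝ} (he0 : 0 ≤ e) (he : Antitone e)
    (hc0 : ∀ k, 0 ≤ c k) (hc1 : ∀ k, c k ≤ 1) (hc : (Q : ℝ) - r ≤ ∑ k, c k) :
    ∑ k : Fin Q with r ≤ k.val, e k ≤ ∑ k, e k * c k := by
  rcases lt_or_ge r Q with hr | hr
  · have hs : (Finset.univ.filter fun k : Fin Q => r ≤ k.val) = Finset.Ici ⟨r, hr⟩ := by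
      ext k; simp [Fin.le_def]
    rw [hs]
    refine sum_le_sum_mul_of_threshold _ (he0 _) (fun k hk => he (Finset.mem_Ici.1 hk))
      (fun k hk => he (le_of_lt (by simpa using hk))) hc0 hc1 ?_
    rw [Fin.card_Ici, Nat.cast_sub hr.le]
    exact hc
  · have hs : (Finset.univ.filter fun k : Fin Q => r ≤ k.val) = ∅ := by
      ext k; simpa using k.2.trans_le hr
    rw [hs, Finset.sum_empty]
    exact Finset.sum_nonneg fun k _ => mul_nonneg (he0 k) (hc0 k)

section EckartYoung

variable {m n : Type*} [Fintype m] [Fintype n] {Q r : ℕ}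
  {P : Matrix m (Fin Q) ℂ} {V : Matrix n (Fin Q) ℂ}

lemma frobSq_mul_diagonal_mul_conjTranspose (hP : Pᴴ * P = 1) (hV : Vᴴ * V = 1)
    (w : Fin Q → ℂ) : frobSq (P * diagonal w * Vᴴ) = ∑ k, normSq (w k) := by
  rw [frobSq_mul_conjTranspose_of_conjTranspose_mul_self_eq_one hV,
    frobSq_mul_of_conjTranspose_mul_self_eq_one hP, frobSq_diagonal]

variable [DecidableEq n]

lemma sum_sq_tail_le_frobSq_sub (hP : Pᴴ * P = 1) (hV : Vᴴ * V = 1) {d : Fin Q → ℝ} (hd0 : 0 ≤ d)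
    (hd : Antitone d) {B : Matrix m n ℂ} (hB : B.rank ≤ r) :
    ∑ k : Fin Q with r ≤ k.val, d k ^ 2 ≤ frobSq (P * diagonal (fun k => (d k : ℂ)) * Vᴴ - B) := by
  obtain ⟨l, W, hW, hBW, hl⟩ := exists_conjTranspose_mul_self_eq_one_mul_eq_zero B
  set c : Fin Q → ℝ := fun k => ∑ j, normSq ((Vᴴ * W) k j)
  have hc1 : ∀ k, c k ≤ 1 := by
    intro k
    have hrow : ∑ β, normSq (Vᴴ k β) = 1 := by
      rw [sum_normSq_eq_re_mul_conjTranspose_apply, conjTranspose_conjTranspose, hV]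
      simp
    calc c k = frobSq (Vᴴ.submatrix (fun _ : Unit => k) id * W) := by simp [frobSq, c, mul_apply]
      _ ≤ frobSq (Vᴴ.submatrix (fun _ : Unit => k) id) :=
        frobSq_mul_le_of_conjTranspose_mul_self_eq_one hW _
      _ = 1 := by simpa [frobSq] using hrow
  have hc : (Q : ℝ) - r ≤ ∑ k, c k := by
    have hsplit := frobSq_mul_add_frobSq_mul_one_sub hW Vᴴ
    have hcompl : frobSq (Vᴴ * (1 - W * Wᴴ)) ≤ frobSq (1 - W * Wᴴ) := by
      rw [← frobSq_conjTranspose, conjTranspose_mul, conjTranspose_conjTranspose,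
        ← frobSq_conjTranspose (1 - W * Wᴴ)]
      exact frobSq_mul_le_of_conjTranspose_mul_self_eq_one hV _
    rw [frobSq_conjTranspose, frobSq_of_conjTranspose_mul_self_eq_one hV,
      Fintype.card_fin] at hsplit
    rw [frobSq_one_sub_mul_conjTranspose hW, Fintype.card_fin] at hcompl
    have : (B.rank : ℝ) ≤ r := by exact_mod_cast hB
    have : (l : ℝ) + B.rank = Fintype.card n := by exact_mod_cast hl
    change (Q : ℝ) - r ≤ frobSq (Vᴴ * W)
    linarith
  calc ∑ k : Fin Q with r ≤ k.val, d k ^ 2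
      ≤ ∑ k, d k ^ 2 * c k :=
        sum_tail_le_sum_mul (fun k => sq_nonneg _)
          (fun k l hkl => pow_le_pow_left₀ (hd0 l) (hd hkl) 2)
          (fun k => Finset.sum_nonneg fun _ _ => normSq_nonneg _) hc1 hc
    _ = frobSq ((P * diagonal (fun k => (d k : ℂ)) * Vᴴ - B) * W) := by
        rw [Matrix.sub_mul, hBW, sub_zero, Matrix.mul_assoc, Matrix.mul_assoc,
          frobSq_mul_of_conjTranspose_mul_self_eq_one hP, frobSq_diagonal_mul]
        simp [c, normSq_ofReal, sq]
    _ ≤ _ := frobSq_mul_le_of_conjTranspose_mul_self_eq_one hW _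

theorem frobSq_truncation_le_frobSq_sub (hP : Pᴴ * P = 1) (hV : Vᴴ * V = 1) {d : Fin Q → ℝ}
    (hd0 : 0 ≤ d) (hd : Antitone d) {B : Matrix m n ℂ} (hB : B.rank ≤ r) :
    frobSq (P * diagonal (fun k => if k.val < r then 0 else (d k : ℂ)) * Vᴴ)
      ≤ frobSq (P * diagonal (fun k => (d k : ℂ)) * Vᴴ - B) := by
  convert sum_sq_tail_le_frobSq_sub hP hV hd0 hd hB using 1
  rw [frobSq_mul_diagonal_mul_conjTranspose hP hV, Finset.sum_filter]
  refine Finset.sum_congr rfl fun k _ => ?_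
  by_cases h : k.val < r
  · simp [h, not_le.2 h]
  · simp [h, not_lt.1 h, normSq_ofReal, sq]

end EckartYoung

lemma rank_mul_diagonal_mul_le {K m n : Type*} [Field K] [Fintype n] {Q r : ℕ}
    (A : Matrix m (Fin Q) K) (B : Matrix (Fin Q) n K) {w : Fin Q → K}
    (hw : ∀ k : Fin Q, r ≤ k.val → w k = 0) : (A * diagonal w * B).rank ≤ r := by
  classical
  calc (A * diagonal w * B).rank ≤ (diagonal w).rank :=
        (rank_mul_le_left _ _).trans (rank_mul_le_right _ _)
    _ = Fintype.card {k // w k ≠ 0} := rank_diagonal w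
    _ ≤ Fintype.card {k : Fin Q // k.val < r} :=
        Fintype.card_subtype_mono _ _ fun k hk => not_le.1 fun h => hk (hw k h)
    _ ≤ r := by
        rw [Fintype.card_subtype, Fin.card_filter_val_lt]
        exact min_le_right _ _

section TScalar

def fourierChar (i : G I) : AddChar (G I) ℂ where
  toFun j := ∏ n, ZMod.stdAddChar (i n * j n)
  map_zero_eq_one' := by simp
  map_add_eq_mul' j k := by
    simp only [Pi.add_apply, mul_add, AddChar.map_add_eq_mul, Finset.prod_mul_distrib]

lemma tfourier_eq_sum_fourierChar (X : TS I) (i : G I) :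
    tfourier X i = ∑ j, X j * fourierChar i j := by
  refine Finset.sum_congr rfl fun j _ => congrArg (X j * ·) ?_
  rw [Finset.mul_sum, Complex.exp_sum]
  refine Finset.prod_congr rfl fun n _ => ?_
  have hval : i n * j n = (((i n).val * (j n).val : ℕ) : ZMod (I n)) := by
    rw [Nat.cast_mul, ZMod.natCast_zmod_val, ZMod.natCast_zmod_val]
  rw [ZMod.stdAddChar_apply, hval, ZMod.toCircle_natCast]
  push_cast
  ring_nf

lemma tfourier_tconv (X Y : TS I) (i : G I) :
    tfourier (tconv X Y) i = tfourier X i * tfourier Y i := by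
  simp only [tfourier_eq_sum_fourierChar, tconv, Finset.sum_mul, Finset.mul_sum]
  rw [Finset.sum_comm]
  refine Finset.sum_congr rfl fun k _ => (Fintype.sum_equiv (Equiv.addRight k) _ _ fun a => ?_).symm
  simp only [Equiv.coe_addRight, add_sub_cancel_right, AddChar.map_add_eq_mul]
  ring

lemma tfourier_tconj (X : TS I) (i : G I) :
    tfourier (tconj X) i = starRingEnd ℂ (tfourier X i) := by
  simp only [tfourier_eq_sum_fourierChar, tconj, map_sum, map_mul, ← AddChar.map_neg_eq_conj]
  exact Fintype.sum_equiv (Equiv.neg (G I)) _ _ fun j => by simp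

lemma tfourier_sub (X Y : TS I) (i : G I) : tfourier (X - Y) i = tfourier X i - tfourier Y i := by
  simp only [tfourier_eq_sum_fourierChar, Pi.sub_apply, sub_mul, Finset.sum_sub_distrib]

lemma tfourier_sum {ι : Type*} (s : Finset ι) (X : ι → TS I) (i : G I) :
    tfourier (∑ b ∈ s, X b) i = ∑ b ∈ s, tfourier (X b) i := by
  simp only [tfourier_eq_sum_fourierChar, Finset.sum_apply, Finset.sum_mul]
  exact Finset.sum_comm

lemma tfourier_ZT (i : G I) : tfourier ZT i = 0 := by
  simp [tfourier_eq_sum_fourierChar, ZT]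

lemma tfourier_ET (i : G I) : tfourier ET i = 1 := by
  simp [tfourier_eq_sum_fourierChar, ET]

lemma TNonneg.exists_tfourier_eq_sq {X : TS I} (hX : TNonneg X) (i : G I) :
    ∃ y : ℝ, tfourier X i = y ^ 2 := by
  obtain ⟨Y, hY, rfl⟩ := hX
  have hreal : starRingEnd ℂ (tfourier Y i) = tfourier Y i := by
    rw [← tfourier_tconj, ← hY]
  exact ⟨(tfourier Y i).re, by rw [tfourier_tconv, Complex.conj_eq_iff_re.1 hreal, sq]⟩

lemma TNonneg.ofReal_re_tfourier {X : TS I} (hX : TNonneg X) (i : G I) :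
    ((tfourier X i).re : ℂ) = tfourier X i := by
  obtain ⟨y, hy⟩ := hX.exists_tfourier_eq_sq i
  rw [hy, ← ofReal_pow, ofReal_re]

lemma TNonneg.re_tfourier_nonneg {X : TS I} (hX : TNonneg X) (i : G I) :
    0 ≤ (tfourier X i).re := by
  obtain ⟨y, hy⟩ := hX.exists_tfourier_eq_sq i
  rw [hy, ← ofReal_pow, ofReal_re]
  positivity

end TScalar

section FourierSlice

variable {a b c : ℕ}

lemma fslice_tmul (A : Matrix (Fin a) (Fin b) (TS I)) (B : Matrix (Fin b) (Fin c) (TS I))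
    (i : G I) : fslice (tmul A B) i = fslice A i * fslice B i := by
  ext α γ
  simp [fslice, tmul, mul_apply, tfourier_sum, tfourier_tconv]

lemma fslice_htrans (A : Matrix (Fin a) (Fin b) (TS I)) (i : G I) :
    fslice (htrans A) i = (fslice A i)ᴴ := by
  ext β α
  simp [fslice, htrans, tfourier_tconj]

lemma fslice_sub (A B : Matrix (Fin a) (Fin b) (TS I)) (i : G I) :
    fslice (A - B) i = fslice A i - fslice B i := by
  ext α β
  simp [fslice, tfourier_sub]

lemma fslice_tdiag (lam : Fin a → TS I) (i : G I) :
    fslice (tdiag lam) i = diagonal fun k => tfourier (lam k) i := by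
  ext k l
  by_cases h : k = l <;> simp [fslice, tdiag, h, tfourier_ZT]

lemma fslice_tId (i : G I) : fslice (tId a : Matrix (Fin a) (Fin a) (TS I)) i = 1 := by
  ext k l
  by_cases h : k = l <;> simp [fslice, tId, one_apply, h, tfourier_ET, tfourier_ZT]

lemma fslice_tmul_tdiag_htrans (U : Matrix (Fin a) (Fin c) (TS I))
    (V : Matrix (Fin b) (Fin c) (TS I)) (lam : Fin c → TS I) (i : G I) :
    fslice (tmul U (tmul (tdiag lam) (htrans V))) i
      = fslice U i * diagonal (fun k => tfourier (lam k) i) * (fslice V i)ᴴ := by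
  rw [fslice_tmul, fslice_tmul, fslice_tdiag, fslice_htrans, Matrix.mul_assoc]

lemma conjTranspose_fslice_mul_self {U : Matrix (Fin a) (Fin b) (TS I)}
    (hU : tmul (htrans U) U = tId b) (i : G I) : (fslice U i)ᴴ * fslice U i = 1 := by
  rw [← fslice_htrans, ← fslice_tmul, hU, fslice_tId]

end FourierSlice

theorem generalized_eckart_young_general (N : ℕ) (I : Fin N → ℕ) [∀ n, NeZero (I n)]
    (D₁ D₂ : ℕ) (X : Matrix (Fin D₁) (Fin D₂) (TS I))
    (U : Matrix (Fin D₁) (Fin (min D₁ D₂)) (TS I))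
    (V : Matrix (Fin D₂) (Fin (min D₁ D₂)) (TS I))
    (lam : Fin (min D₁ D₂) → TS I)
    (hX : X = tmul U (tmul (tdiag lam) (htrans V)))
    (hU : tmul (htrans U) U = tId (min D₁ D₂))
    (hV : tmul (htrans V) V = tId (min D₁ D₂))
    (hlam : ∀ k, TNonneg (lam k))
    (hord : ∀ k l : Fin (min D₁ D₂), k ≤ l →
      ∀ i, (tfourier (lam l) i).re ≤ (tfourier (lam k) i).re)
    (r : ℕ)
    (Xhat : Matrix (Fin D₁) (Fin D₂) (TS I))
    (hXhat : Xhat =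
      tmul U (tmul (tdiag fun k => if (k : ℕ) < r then lam k else ZT) (htrans V))) :
    (∀ i, (fslice Xhat i).rank ≤ r) ∧
    (∀ Y : Matrix (Fin D₁) (Fin D₂) (TS I),
      (∀ i, (fslice Y i).rank ≤ r) →
      ∀ i, frob (fslice (X - Xhat) i) ≤ frob (fslice (X - Y) i)) := by
  refine ⟨fun i => ?_, fun Y hY i => ?_⟩
  · rw [hXhat, fslice_tmul_tdiag_htrans]
    exact rank_mul_diagonal_mul_le _ _ fun k hk => by simp [not_lt.2 hk, tfourier_ZT]
  · set d : Fin (min D₁ D₂) → ℝ := fun k => (tfourier (lam k) i).re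
    have hd : ∀ k, tfourier (lam k) i = d k := fun k => ((hlam k).ofReal_re_tfourier i).symm
    have hslice : fslice (X - Y) i
        = fslice U i * diagonal (fun k => (d k : ℂ)) * (fslice V i)ᴴ - fslice Y i := by
      simp only [fslice_sub, hX, fslice_tmul_tdiag_htrans, hd]
    have hslice_hat : fslice (X - Xhat) i
        = fslice U i * diagonal (fun k => if k.val < r then 0 else (d k : ℂ)) * (fslice V i)ᴴ := by
      rw [fslice_sub, hX, hXhat, fslice_tmul_tdiag_htrans, fslice_tmul_tdiag_htrans,
        ← Matrix.sub_mul, ← Matrix.mul_sub, diagonal_sub]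
      congr 3 with k
      by_cases hk : k.val < r <;> simp [hk, hd, tfourier_ZT]
    rw [frob_eq_sqrt_frobSq, frob_eq_sqrt_frobSq, hslice, hslice_hat]
    exact Real.sqrt_le_sqrt <| frobSq_truncation_le_frobSq_sub
      (conjTranspose_fslice_mul_self hU i) (conjTranspose_fslice_mul_self hV i)
      (fun k => (hlam k).re_tfourier_nonneg i) (fun k l hkl => hord k l hkl i) (hY i)

/-- generalized Eckart–Young–Mirsky theorem.  The rank-`r` TSVD
truncation `X̂` has rank at most `r·E_T` and is a best approximation to `X`, in the
generalized Frobenius norm, among all t-matrices of rank at most `r·E_T` (rank and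
norm being compared Fourier-sliceswise, which is the partial order on nonnegative
t-scalars). -/
theorem generalized_eckart_young (N : ℕ) (I : Fin N → ℕ) [∀ n, NeZero (I n)]
    (D₁ D₂ : ℕ) (X : Matrix (Fin D₁) (Fin D₂) (TS I))
    (U : Matrix (Fin D₁) (Fin (min D₁ D₂)) (TS I))
    (V : Matrix (Fin D₂) (Fin (min D₁ D₂)) (TS I))
    (lam : Fin (min D₁ D₂) → TS I)
    (hX : X = tmul U (tmul (tdiag lam) (htrans V)))
    (hU : tmul (htrans U) U = tId (min D₁ D₂))
    (hV : tmul (htrans V) V = tId (min D₁ D₂))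
    (hlam : ∀ k, TNonneg (lam k))
    (hord : ∀ k l : Fin (min D₁ D₂), k ≤ l →
      ∀ i, (tfourier (lam l) i).re ≤ (tfourier (lam k) i).re)
    (r : ℕ) (hr1 : 1 ≤ r) (hrQ : r ≤ min D₁ D₂)
    (Xhat : Matrix (Fin D₁) (Fin D₂) (TS I))
    (hXhat : Xhat =
      tmul U (tmul (tdiag fun k => if (k : ℕ) < r then lam k else ZT) (htrans V))) :
    (∀ i, (fslice Xhat i).rank ≤ r) ∧
    (∀ Y : Matrix (Fin D₁) (Fin D₂) (TS I),
      (∀ i, (fslice Y i).rank ≤ r) →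
      ∀ i, frob (fslice (X - Xhat) i) ≤ frob (fslice (X - Y) i)) :=
  generalized_eckart_young_general N I D₁ D₂ X U V lam hX hU hV hlam hord r Xhat hXhat
end
end
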